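/- arXiv:1503.01148 — 3 statements merged into one kernel-verified Lean document; each statement's English description precedes it below -/
import Mathlib

section
/- Let R, R_d ∈ SO(3) and define the attitude error function Ψ = (1/2) tr(I - R_d^T R) and the error vector e_R = (1/2)(R_d^T R - R^T R_d)^∨, where ∨ is the inverse of the hat map. If Ψ < ψ < 2, then (1/2)‖e_R‖² ≤ Ψ ≤ (1/(2-ψ))‖e_R‖². -/
open Matrix BigOperators

/-- The vee map of a 3×3 (skew-symmetric) matrix. -/
def vee (S : Matrix (Fin 3) (Fin 3) ℝ) : Fin 3 → ℝ := ![S 2 1, S 0 2, S 1 0]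

set_option maxHeartbeats 1600000 in
/-- for `R, R_d ∈ SO(3)`, with `Ψ = (1/2) tr(I - R_dᵀ R)` and
`e_R = (1/2)(R_dᵀ R - Rᵀ R_d)ᵛ`, if `Ψ < ψ < 2` then
`(1/2)‖e_R‖² ≤ Ψ ≤ (1/(2-ψ))‖e_R‖²`. -/
theorem stmt6 (R Rd : Matrix (Fin 3) (Fin 3) ℝ)
    (hR : Rᵀ * R = 1) (hdetR : R.det = 1)
    (hRd : Rdᵀ * Rd = 1) (hdetRd : Rd.det = 1)
    (ψ : ℝ) (hψ : ψ < 2)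
    (Ψ : ℝ) (hΨdef : Ψ = (1/2) * ((1 : Matrix (Fin 3) (Fin 3) ℝ) - Rdᵀ * R).trace)
    (hΨ : Ψ < ψ)
    (eR : Fin 3 → ℝ) (heR : eR = (1/2 : ℝ) • vee (Rdᵀ * R - Rᵀ * Rd)) :
    (1/2) * (∑ i, (eR i)^2) ≤ Ψ ∧ Ψ ≤ (1/(2 - ψ)) * (∑ i, (eR i)^2) := by
  set Q : Matrix (Fin 3) (Fin 3) ℝ := Rdᵀ * R with hQ
  clear_value Q
  have hRR : R * Rᵀ = 1 := mul_eq_one_comm.mp hR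
  have hRdRd : Rd * Rdᵀ = 1 := mul_eq_one_comm.mp hRd
  have hQQt : Q * Qᵀ = 1 := by
    rw [hQ, Matrix.transpose_mul, Matrix.transpose_transpose,
      mul_assoc, ← mul_assoc R, hRR, one_mul, hRd]
  have hQtQ : Qᵀ * Q = 1 := mul_eq_one_comm.mp hQQt
  have hdetQ : Q.det = 1 := by
    rw [hQ, Matrix.det_mul, Matrix.det_transpose, hdetRd, hdetR, one_mul]
  -- transpose equals inverse, hence adjugate equals transpose
  have hQT : Rᵀ * Rd = Qᵀ := by
    rw [hQ, Matrix.transpose_mul, Matrix.transpose_transpose]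
  have hinv : Q⁻¹ = Qᵀ := Matrix.inv_eq_right_inv hQQt
  have hadj : Q.adjugate = Qᵀ := by
    have := Matrix.inv_def Q
    rw [hdetQ, Ring.inverse_one, one_smul] at this
    rw [← this, hinv]
  -- scalar orthogonality equations (rows of Q)
  have r1 : Q 0 0 * Q 0 0 + Q 0 1 * Q 0 1 + Q 0 2 * Q 0 2 = 1 := by
    have := congrFun (congrFun hQQt 0) 0
    simpa [Matrix.mul_apply, Fin.sum_univ_three, Matrix.one_apply, mul_comm] using this
  have r2 : Q 1 0 * Q 1 0 + Q 1 1 * Q 1 1 + Q 1 2 * Q 1 2 = 1 := by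
    have := congrFun (congrFun hQQt 1) 1
    simpa [Matrix.mul_apply, Fin.sum_univ_three, Matrix.one_apply, mul_comm] using this
  have r3 : Q 2 0 * Q 2 0 + Q 2 1 * Q 2 1 + Q 2 2 * Q 2 2 = 1 := by
    have := congrFun (congrFun hQQt 2) 2
    simpa [Matrix.mul_apply, Fin.sum_univ_three, Matrix.one_apply, mul_comm] using this
  -- cofactor identities
  have hadj' := Matrix.adjugate_fin_three Q
  rw [hadj] at hadj'
  have c1 : Q 1 1 * Q 2 2 - Q 1 2 * Q 2 1 = Q 0 0 := by
    have := congrFun (congrFun hadj'.symm 0) 0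
    simpa [Matrix.transpose_apply] using this
  have c2 : Q 0 0 * Q 2 2 - Q 0 2 * Q 2 0 = Q 1 1 := by
    have := congrFun (congrFun hadj'.symm 1) 1
    simpa [Matrix.transpose_apply] using this
  have c3 : Q 0 0 * Q 1 1 - Q 0 1 * Q 1 0 = Q 2 2 := by
    have := congrFun (congrFun hadj'.symm 2) 2
    simpa [Matrix.transpose_apply] using this
  -- express Ψ
  have hΨ' : Ψ = (1/2) * (3 - (Q 0 0 + Q 1 1 + Q 2 2)) := by
    rw [hΨdef]
    simp [Matrix.trace, Matrix.diag, Fin.sum_univ_three, Matrix.sub_apply,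
      Matrix.one_apply]
  -- express eR components
  have he0 : eR 0 = (1/2) * (Q 2 1 - Q 1 2) := by
    rw [heR, hQT]; simp [vee, Matrix.sub_apply, Matrix.transpose_apply]
  have he1 : eR 1 = (1/2) * (Q 0 2 - Q 2 0) := by
    rw [heR, hQT]; simp [vee, Matrix.sub_apply, Matrix.transpose_apply]
  have he2 : eR 2 = (1/2) * (Q 1 0 - Q 0 1) := by
    rw [heR, hQT]; simp [vee, Matrix.sub_apply, Matrix.transpose_apply]
  have hsum : ∑ i, (eR i)^2 = Ψ * (2 - Ψ) := by
    rw [Fin.sum_univ_three, he0, he1, he2, hΨ']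
    linear_combination (1/4)*r1 + (1/4)*r2 + (1/4)*r3 + (1/2)*c1 + (1/2)*c2 + (1/2)*c3
  have d1 : Q 0 0 ≤ 1 := by nlinarith [r1, sq_nonneg (Q 0 1), sq_nonneg (Q 0 2), sq_nonneg (Q 0 0 - 1)]
  have d2 : Q 1 1 ≤ 1 := by nlinarith [r2, sq_nonneg (Q 1 0), sq_nonneg (Q 1 2), sq_nonneg (Q 1 1 - 1)]
  have d3 : Q 2 2 ≤ 1 := by nlinarith [r3, sq_nonneg (Q 2 0), sq_nonneg (Q 2 1), sq_nonneg (Q 2 2 - 1)]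
  have hΨ0 : 0 ≤ Ψ := by rw [hΨ']; linarith
  have h2ψ : 0 < 2 - ψ := by linarith
  constructor
  · rw [hsum]; nlinarith [hΨ0]
  · rw [hsum, one_div, inv_mul_eq_div, le_div_iff₀ h2ψ]
    nlinarith [mul_nonneg hΨ0 (by linarith : (0:ℝ) ≤ ψ - Ψ)]
end

section
/- Let W : [0, ∞) → R be a nonnegative differentiable function satisfying W'(t) ≤ -ε₁ W(t) - ε₂ W(t)^{(r+1)/2} for constants ε₁, ε₂ > 0 and 0 < r < 1, whenever W(t) > 0. Then W(t) = 0 for all t ≥ T, where T = (2/(ε₁(1-r))) ln((ε₁ W(0)^{(1-r)/2} + ε₂)/ε₂). -/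
/-!
Put `q = (1 - r) / 2`. Wherever `W > 0`, the substitution `V = W ^ q` linearises the inequality:
`V' = q W ^ (q - 1) W' ≤ -a V - b` with `a = ε₁ q`, `b = ε₂ q`, since `(r + 1) / 2 + q = 1`.
Grönwall's bound `V t ≤ (V 0 + b / a) e^{-a t} - b / a` is nonpositive from
`t = a⁻¹ log ((a V 0 + b) / b)` on, and this is exactly the stated `T`. The substitution is
legitimate on all of `[0, t]` when `W t > 0`: a nonnegative `W` that does not increase where it is
positive cannot leave zero once it has reached it.
-/

open Real Set

theorem pos_of_deriv_nonpos_of_pos {f : ℝ → ℝ} {s u : ℝ}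
    (hcont : ContinuousOn f (Icc s u)) (hdiff : DifferentiableOn ℝ f (Ioo s u))
    (hnonneg : ∀ x ∈ Icc s u, 0 ≤ f x) (hderiv : ∀ x ∈ Ioo s u, 0 < f x → deriv f x ≤ 0)
    (hu : 0 < f u) : ∀ x ∈ Icc s u, 0 < f x := by
  intro x hx
  refine (hnonneg x hx).lt_of_ne' fun hx0 => hu.ne' ?_
  -- `f` is positive, hence nonincreasing, after its last zero `s'` in `[x, u]`.
  have hzeros : IsClosed (Icc x u ∩ f ⁻¹' {0}) :=
    (hcont.mono (Icc_subset_Icc_left hx.1)).preimage_isClosed_of_isClosed isClosed_Icc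
      isClosed_singleton
  obtain ⟨s', ⟨hs'Icc, hfs'⟩, hlast⟩ : ∃ s', IsGreatest (Icc x u ∩ f ⁻¹' {0}) s' :=
    (isCompact_Icc.of_isClosed_subset hzeros inter_subset_left).exists_isGreatest
      ⟨x, left_mem_Icc.2 hx.2, hx0⟩
  have hss' : s ≤ s' := hx.1.trans hs'Icc.1
  have hsub : Icc s' u ⊆ Icc s u := Icc_subset_Icc_left hss'
  have hpos : ∀ y ∈ Ioc s' u, 0 < f y := fun y hy =>
    (hnonneg y (hsub (Ioc_subset_Icc_self hy))).lt_of_ne' fun h0 =>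
      hy.1.not_ge (hlast ⟨⟨hs'Icc.1.trans hy.1.le, hy.2⟩, h0⟩)
  have hanti : AntitoneOn f (Icc s' u) := by
    refine antitoneOn_of_deriv_nonpos (convex_Icc s' u) (hcont.mono hsub) ?_ ?_ <;>
      rw [interior_Icc]
    · exact hdiff.mono (Ioo_subset_Ioo_left hss')
    · exact fun y hy => hderiv y (Ioo_subset_Ioo_left hss' hy)
        (hpos y (Ioo_subset_Ioc_self hy))
  refine le_antisymm ?_ hu.le
  exact (hanti (left_mem_Icc.2 hs'Icc.2) (right_mem_Icc.2 hs'Icc.2) hs'Icc.2).trans_eq hfs'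

noncomputable def settlingTime (a b v₀ : ℝ) : ℝ := a⁻¹ * log ((a * v₀ + b) / b)

theorem settlingTime_nonneg {a b v₀ : ℝ} (ha : 0 < a) (hb : 0 < b) (hv₀ : 0 ≤ v₀) :
    0 ≤ settlingTime a b v₀ := by
  refine mul_nonneg (inv_nonneg.2 ha.le) (log_nonneg ?_)
  rw [le_div_iff₀ hb]
  nlinarith

theorem settlingTime_mul_right {a b q : ℝ} (v₀ : ℝ) (hq : q ≠ 0) :
    settlingTime (a * q) (b * q) v₀ = settlingTime a b v₀ / q := by
  rw [settlingTime, settlingTime, mul_right_comm, ← add_mul, mul_div_mul_right _ _ hq, mul_inv]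
  ring

theorem nonpos_of_deriv_le_neg_mul_sub {f f' : ℝ → ℝ} {a b t₀ t : ℝ} (ha : 0 < a) (hb : 0 < b)
    (hcont : ContinuousOn f (Icc t₀ t))
    (hderiv : ∀ x ∈ Ico t₀ t, HasDerivWithinAt f (f' x) (Ici x) x)
    (hbound : ∀ x ∈ Ico t₀ t, f' x ≤ -a * f x - b) (hf₀ : 0 ≤ f t₀)
    (ht : t₀ + settlingTime a b (f t₀) ≤ t) : f t ≤ 0 := by
  have hT := settlingTime_nonneg ha hb hf₀
  have hgronwall := le_gronwallBound_of_liminf_deriv_right_le hcont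
    (fun x hx _ hr => (hderiv x hx).liminf_right_slope_le hr) le_rfl
    (fun x hx => (hbound x hx).trans_eq (sub_eq_add_neg _ _))
    t ⟨by linarith, le_rfl⟩
  have hexp : (a * f t₀ + b) / b ≤ exp (a * (t - t₀)) := by
    calc (a * f t₀ + b) / b = exp (a * settlingTime a b (f t₀)) := by
          rw [settlingTime, ← mul_assoc, mul_inv_cancel₀ ha.ne', one_mul, exp_log (by positivity)]
      _ ≤ exp (a * (t - t₀)) := by gcongr; linarith
  rw [gronwallBound_of_K_ne_0 (neg_ne_zero.2 ha.ne')] at hgronwall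
  rw [div_le_iff₀ hb] at hexp
  have hcancel : exp (-(a * (t - t₀))) * (exp (a * (t - t₀)) * b) = b := by
    rw [← mul_assoc, ← exp_add, neg_add_cancel, exp_zero, one_mul]
  have hdecay := mul_le_mul_of_nonneg_left hexp (exp_pos (-(a * (t - t₀)))).le
  field_simp at hgronwall
  nlinarith

theorem mul_rpow_sub_one_le {w w' ε₁ ε₂ p q : ℝ} (hw : 0 < w) (hq : 0 ≤ q) (hpq : p + q = 1)
    (hw' : w' ≤ -ε₁ * w - ε₂ * w ^ p) :
    w' * q * w ^ (q - 1) ≤ -(ε₁ * q) * w ^ q - ε₂ * q := by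
  have hw1 : w * w ^ (q - 1) = w ^ q := by
    rw [mul_comm, ← rpow_add_one hw.ne', sub_add_cancel]
  have hwp : w ^ p * w ^ (q - 1) = 1 := by
    rw [← rpow_add hw, show p + (q - 1) = 0 by linarith, rpow_zero]
  calc w' * q * w ^ (q - 1) = w' * (q * w ^ (q - 1)) := by ring
    _ ≤ (-ε₁ * w - ε₂ * w ^ p) * (q * w ^ (q - 1)) := by gcongr
    _ = -(ε₁ * q) * (w * w ^ (q - 1)) - ε₂ * q * (w ^ p * w ^ (q - 1)) := by ring
    _ = -(ε₁ * q) * w ^ q - ε₂ * q := by rw [hw1, hwp, mul_one]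

theorem stmt11_general (W : ℝ → ℝ) (ε₁ ε₂ r : ℝ)
    (hε₁ : 0 < ε₁) (hε₂ : 0 < ε₂) (hr1 : r < 1)
    (hWpos : ∀ t, 0 ≤ t → 0 ≤ W t)
    (hWdiff : ∀ t, 0 ≤ t → DifferentiableAt ℝ W t)
    (hWineq : ∀ t, 0 ≤ t → 0 < W t →
      deriv W t ≤ -ε₁ * W t - ε₂ * (W t) ^ ((r + 1) / 2)) :
    ∀ t, (2 / (ε₁ * (1 - r))) * Real.log ((ε₁ * (W 0) ^ ((1 - r) / 2) + ε₂) / ε₂) ≤ t →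
      W t = 0 := by
  intro t ht
  set q := (1 - r) / 2 with hq_def
  have hq : 0 < q := by linarith
  have hT : 2 / (ε₁ * (1 - r)) * log ((ε₁ * W 0 ^ q + ε₂) / ε₂)
      = settlingTime (ε₁ * q) (ε₂ * q) (W 0 ^ q) := by
    rw [settlingTime_mul_right _ hq.ne', settlingTime, hq_def]
    field_simp
  have hW0 : 0 ≤ W 0 ^ q := rpow_nonneg (hWpos 0 le_rfl) q
  have ht0 : 0 ≤ t := (settlingTime_nonneg (by positivity) (by positivity) hW0).trans (hT ▸ ht)
  by_contra hne
  have hpos : ∀ s ∈ Icc 0 t, 0 < W s :=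
    pos_of_deriv_nonpos_of_pos
      (fun x hx => (hWdiff x hx.1).continuousAt.continuousWithinAt)
      (fun x hx => (hWdiff x hx.1.le).differentiableWithinAt)
      (fun x hx => hWpos x hx.1)
      (fun x hx hWx => (hWineq x hx.1.le hWx).trans
        (by linarith [mul_pos hε₁ hWx, mul_pos hε₂ (rpow_pos_of_pos hWx ((r + 1) / 2))]))
      ((hWpos t ht0).lt_of_ne' hne)
  have hderiv : ∀ x ∈ Icc 0 t,
      HasDerivAt (fun s => W s ^ q) (deriv W x * q * W x ^ (q - 1)) x := fun x hx =>
    (hWdiff x hx.1).hasDerivAt.rpow_const (Or.inl (hpos x hx).ne')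
  have hWt : W t ^ q ≤ 0 :=
    nonpos_of_deriv_le_neg_mul_sub (f := fun s => W s ^ q) (by positivity) (by positivity)
      (fun x hx => (hderiv x hx).continuousAt.continuousWithinAt)
      (fun x hx => (hderiv x (Ico_subset_Icc_self hx)).hasDerivWithinAt)
      (fun x hx => mul_rpow_sub_one_le (hpos x (Ico_subset_Icc_self hx)) hq.le
        (by ring) (hWineq x hx.1 (hpos x (Ico_subset_Icc_self hx))))
      hW0 (by simpa [hT] using ht)
  exact (rpow_pos_of_pos (hpos t ⟨ht0, le_rfl⟩) q).not_ge hWt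

/-- finite-time settling. If `W : [0,∞) → ℝ` is nonnegative, differentiable
and satisfies `W' ≤ -ε₁ W - ε₂ W^{(r+1)/2}` whenever `W > 0`, with `ε₁, ε₂ > 0` and
`0 < r < 1`, then `W(t) = 0` for all `t ≥ T` where
`T = (2/(ε₁(1-r))) ln((ε₁ W(0)^{(1-r)/2} + ε₂)/ε₂)`. -/
theorem stmt11 (W : ℝ → ℝ) (ε₁ ε₂ r : ℝ)
    (hε₁ : 0 < ε₁) (hε₂ : 0 < ε₂) (hr0 : 0 < r) (hr1 : r < 1)
    (hWpos : ∀ t, 0 ≤ t → 0 ≤ W t)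
    (hWdiff : ∀ t, 0 ≤ t → DifferentiableAt ℝ W t)
    (hWineq : ∀ t, 0 ≤ t → 0 < W t →
      deriv W t ≤ -ε₁ * W t - ε₂ * (W t) ^ ((r + 1) / 2)) :
    ∀ t, (2 / (ε₁ * (1 - r))) * Real.log ((ε₁ * (W 0) ^ ((1 - r) / 2) + ε₂) / ε₂) ≤ t →
      W t = 0 :=
  stmt11_general W ε₁ ε₂ r hε₁ hε₂ hr1 hWpos hWdiff hWineq
end

section
/- For R, R_c ∈ SO(3), let e_R = (1/2)(R_c^T R - R^T R_c)^∨ and E(R, R_c) = (1/2)(tr(R^T R_c) I - R^T R_c). Then ‖E(R,R_c) v‖ ≤ ‖v‖ for all v ∈ R^3; in particular the operator norm of E(R, R_c) is at most 1. -/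
open Matrix BigOperators

noncomputable def enorm (x : Fin 3 → ℝ) : ℝ := Real.sqrt (∑ i, (x i)^2)

/-!
Put `Q = Rᵀ R_c ∈ SO(3)` and `t = tr Q`, so that `E = (t I - Q) / 2` and
`4 ‖E v‖² = t² ‖v‖² - 2 t vᵀQv + ‖v‖²`. Cayley–Hamilton together with `adj Q = Qᵀ` gives
`Q² = Qᵀ + t Q - t I`. Taking traces, `tr Q² = t² - 2t ≤ 3`, i.e. `-1 ≤ t ≤ 3`; and
`N = Q + Qᵀ + (1 - t) I` satisfies `N² = (3 - t) N`, which (with Cauchy–Schwarz) makes `N`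
positive semidefinite, i.e. `2 vᵀQv ≥ (t - 1) ‖v‖²`. Together with `vᵀQv ≤ ‖v‖²` this yields
`‖E v‖ ≤ ‖v‖`, separately for `t ≥ 0` and `t < 0`.
-/

namespace Matrix

lemma dotProduct_self_nonneg_real {n : Type*} [Fintype n] (v : n → ℝ) : 0 ≤ v ⬝ᵥ v :=
  Finset.sum_nonneg fun i _ => mul_self_nonneg (v i)

lemma adjugate_fin_three_eq {R : Type*} [CommRing R] (A : Matrix (Fin 3) (Fin 3) R) :
    A.adjugate = A * A - A.trace • A + A.adjugate.trace • 1 := by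
  ext i j
  fin_cases i <;> fin_cases j <;>
    simp [adjugate_fin_three, mul_apply, trace, Fin.sum_univ_three] <;> ring

section Square

variable {n : Type*} [Fintype n] [DecidableEq n] {Q : Matrix n n ℝ}

lemma mulVec_dotProduct_mulVec_of_mem_orthogonalGroup (hQ : Q ∈ orthogonalGroup n ℝ)
    (v : n → ℝ) : (Q *ᵥ v) ⬝ᵥ (Q *ᵥ v) = v ⬝ᵥ v := by
  rw [dotProduct_mulVec, ← mulVec_transpose, mulVec_mulVec, (mem_orthogonalGroup_iff' n ℝ).1 hQ,
    one_mulVec]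

lemma dotProduct_mulVec_le_of_mem_orthogonalGroup (hQ : Q ∈ orthogonalGroup n ℝ)
    (v : n → ℝ) : v ⬝ᵥ (Q *ᵥ v) ≤ v ⬝ᵥ v := by
  have h := dotProduct_self_nonneg_real (v - Q *ᵥ v)
  rw [dotProduct_sub, sub_dotProduct, sub_dotProduct, dotProduct_comm (Q *ᵥ v) v,
    mulVec_dotProduct_mulVec_of_mem_orthogonalGroup hQ] at h
  linarith

lemma trace_le_card_of_mem_orthogonalGroup (hQ : Q ∈ orthogonalGroup n ℝ) :
    Q.trace ≤ Fintype.card n := by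
  rw [trace, ← nsmul_one, ← Finset.card_univ, ← Finset.sum_const]
  refine Finset.sum_le_sum fun i _ => ?_
  simpa using dotProduct_mulVec_le_of_mem_orthogonalGroup hQ (Pi.single i 1)

lemma adjugate_eq_transpose_of_mem_specialOrthogonalGroup
    (hQ : Q ∈ specialOrthogonalGroup n ℝ) : Q.adjugate = Qᵀ := by
  obtain ⟨hQ, hdet⟩ := mem_specialOrthogonalGroup_iff.1 hQ
  simpa [inv_def, hdet] using inv_eq_left_inv ((mem_orthogonalGroup_iff' n ℝ).1 hQ)

/-- For the rotation by angle `φ` about the unit axis `a`, this is `2 (1 - cos φ) a aᵀ`,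
since `tr Q = 1 + 2 cos φ`. -/
def rotationAxisForm (Q : Matrix n n ℝ) : Matrix n n ℝ :=
  Q + Qᵀ + (1 - Q.trace) • 1

lemma transpose_rotationAxisForm (Q : Matrix n n ℝ) :
    (rotationAxisForm Q)ᵀ = rotationAxisForm Q := by
  rw [rotationAxisForm, transpose_add, transpose_add, transpose_transpose, transpose_smul,
    transpose_one, add_comm Qᵀ]

lemma dotProduct_rotationAxisForm_mulVec (Q : Matrix n n ℝ) (v : n → ℝ) :
    v ⬝ᵥ (rotationAxisForm Q *ᵥ v) = 2 * (v ⬝ᵥ (Q *ᵥ v)) + (1 - Q.trace) * (v ⬝ᵥ v) := by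
  rw [rotationAxisForm, add_mulVec, add_mulVec, smul_mulVec, one_mulVec, dotProduct_add,
    dotProduct_add, dotProduct_smul, mulVec_transpose, dotProduct_comm v (v ᵥ* Q),
    ← dotProduct_mulVec, smul_eq_mul]
  ring

noncomputable def attitudeErrorMatrix (Q : Matrix n n ℝ) : Matrix n n ℝ :=
  (1 / 2 : ℝ) • (Q.trace • 1 - Q)

end Square

section SpecialOrthogonalFinThree

variable {Q : Matrix (Fin 3) (Fin 3) ℝ} (hQ : Q ∈ specialOrthogonalGroup (Fin 3) ℝ)
include hQ

lemma transpose_eq_of_mem_specialOrthogonalGroup_fin_three :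
    Qᵀ = Q * Q - Q.trace • Q + Q.trace • 1 := by
  have h := adjugate_fin_three_eq Q
  rwa [adjugate_eq_transpose_of_mem_specialOrthogonalGroup hQ, trace_transpose] at h

lemma trace_mul_self_of_mem_specialOrthogonalGroup_fin_three :
    (Q * Q).trace = Q.trace ^ 2 - 2 * Q.trace := by
  have h := congrArg trace (transpose_eq_of_mem_specialOrthogonalGroup_fin_three hQ)
  simp only [trace_transpose, trace_add, trace_sub, trace_smul, trace_one, Fintype.card_fin,
    smul_eq_mul, Nat.cast_ofNat] at h
  linear_combination -h

lemma trace_mem_Icc_of_mem_specialOrthogonalGroup_fin_three : Q.trace ∈ Set.Icc (-1) 3 := by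
  have h := trace_le_card_of_mem_orthogonalGroup (mul_mem hQ.1 hQ.1)
  rw [trace_mul_self_of_mem_specialOrthogonalGroup_fin_three hQ, Fintype.card_fin,
    Nat.cast_ofNat] at h
  constructor <;> nlinarith

lemma rotationAxisForm_mul_self :
    rotationAxisForm Q * rotationAxisForm Q = (3 - Q.trace) • rotationAxisForm Q := by
  have hQQ : Q * Q = Qᵀ + Q.trace • Q - Q.trace • 1 := by
    rw [transpose_eq_of_mem_specialOrthogonalGroup_fin_three hQ]; abel
  have hQTQT : Qᵀ * Qᵀ = Q + Q.trace • Qᵀ - Q.trace • 1 := by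
    rw [← transpose_mul, hQQ]
    simp only [transpose_add, transpose_sub, transpose_smul, transpose_one, transpose_transpose]
  have hQTQ : Qᵀ * Q = 1 := (mem_orthogonalGroup_iff' _ ℝ).1 hQ.1
  have hQQT : Q * Qᵀ = 1 := (mem_orthogonalGroup_iff _ ℝ).1 hQ.1
  simp only [rotationAxisForm, add_mul, mul_add, Matrix.smul_mul, Matrix.mul_smul, one_mul,
    mul_one, hQQ, hQTQT, hQTQ, hQQT, smul_add, smul_smul]
  module

lemma dotProduct_rotationAxisForm_mulVec_nonneg (v : Fin 3 → ℝ) :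
    0 ≤ v ⬝ᵥ (rotationAxisForm Q *ᵥ v) := by
  set N := rotationAxisForm Q
  set b := v ⬝ᵥ (N *ᵥ v)
  have hNv : (N *ᵥ v) ⬝ᵥ (N *ᵥ v) = (3 - Q.trace) * b := by
    rw [dotProduct_mulVec, ← mulVec_transpose, transpose_rotationAxisForm, mulVec_mulVec,
      rotationAxisForm_mul_self hQ, smul_mulVec, smul_dotProduct, smul_eq_mul, dotProduct_comm]
  have hCS : b ^ 2 ≤ (v ⬝ᵥ v) * ((N *ᵥ v) ⬝ᵥ (N *ᵥ v)) := by
    simpa only [b, dotProduct, sq] using Finset.sum_mul_sq_le_sq_mul_sq Finset.univ v (N *ᵥ v)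
  have ht := (trace_mem_Icc_of_mem_specialOrthogonalGroup_fin_three hQ).2
  have hs := dotProduct_self_nonneg_real v
  -- if `b < 0`, then `hNv` forces `tr Q = 3`, and then `hCS` forces `b = 0`
  nlinarith [dotProduct_self_nonneg_real (N *ᵥ v), mul_nonneg hs (sub_nonneg.2 ht)]

lemma attitudeErrorMatrix_mulVec_dotProduct_le (v : Fin 3 → ℝ) :
    (attitudeErrorMatrix Q *ᵥ v) ⬝ᵥ (attitudeErrorMatrix Q *ᵥ v) ≤ v ⬝ᵥ v := by
  set t := Q.trace
  have hEv : attitudeErrorMatrix Q *ᵥ v = (1 / 2 : ℝ) • (t • v - Q *ᵥ v) := by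
    rw [attitudeErrorMatrix, smul_mulVec, sub_mulVec, smul_mulVec, one_mulVec]
  have hb := dotProduct_rotationAxisForm_mulVec_nonneg hQ v
  rw [dotProduct_rotationAxisForm_mulVec] at hb
  have ha := dotProduct_mulVec_le_of_mem_orthogonalGroup hQ.1 v
  have hs := dotProduct_self_nonneg_real v
  obtain ⟨ht₁, ht₃⟩ := trace_mem_Icc_of_mem_specialOrthogonalGroup_fin_three hQ
  rw [hEv]
  simp only [smul_dotProduct, dotProduct_smul, dotProduct_sub, sub_dotProduct,
    dotProduct_comm (Q *ᵥ v) v, mulVec_dotProduct_mulVec_of_mem_orthogonalGroup hQ.1,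
    smul_eq_mul]
  rcases le_or_gt 0 t with ht | ht
  · nlinarith [mul_nonneg ht hb, mul_nonneg (sub_nonneg.2 ht₃) hs]
  · nlinarith [mul_nonneg (neg_nonneg.2 ht.le) (sub_nonneg.2 ha),
      mul_nonneg (mul_nonneg (sub_nonneg.2 ht₃) (neg_le_iff_add_nonneg.1 ht₁)) hs]

end SpecialOrthogonalFinThree

end Matrix

/-- for `R, R_c ∈ SO(3)` and
`E(R,R_c) = (1/2)(tr(Rᵀ R_c) I - Rᵀ R_c)`, one has `‖E v‖ ≤ ‖v‖` for all `v`. -/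
theorem stmt18 (R Rc : Matrix (Fin 3) (Fin 3) ℝ)
    (hR : Rᵀ * R = 1) (hdetR : R.det = 1)
    (hRc : Rcᵀ * Rc = 1) (hdetRc : Rc.det = 1)
    (E : Matrix (Fin 3) (Fin 3) ℝ)
    (hE : E = (1/2 : ℝ) • ((Rᵀ * Rc).trace • (1 : Matrix (Fin 3) (Fin 3) ℝ) - Rᵀ * Rc)) :
    ∀ v : Fin 3 → ℝ, _root_.enorm (E *ᵥ v) ≤ _root_.enorm v := by
  intro v
  have hQ : Rᵀ * Rc ∈ specialOrthogonalGroup (Fin 3) ℝ := by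
    refine mem_specialOrthogonalGroup_iff.2 ⟨(mem_orthogonalGroup_iff' _ ℝ).2 ?_, ?_⟩
    · rw [transpose_mul, transpose_transpose, Matrix.mul_assoc, ← Matrix.mul_assoc R,
        mul_eq_one_comm.1 hR, Matrix.one_mul, hRc]
    · rw [det_mul, det_transpose, hdetR, hdetRc, one_mul]
  have enorm_eq (x : Fin 3 → ℝ) : _root_.enorm x = √(x ⬝ᵥ x) := by
    simp only [_root_.enorm, dotProduct, sq]
  rw [enorm_eq, enorm_eq]
  exact Real.sqrt_le_sqrt (hE ▸ attitudeErrorMatrix_mulVec_dotProduct_le hQ v)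
end
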